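/- For real C > 1 and |β| < 1, one has √((C² − β)/(1 − β)) = C + 2·∑_{p≥1} β^p A_p(C), where A_p(C) = C^{1−2p} ∑_{q=0}^{p−1} binom(p−1,q)·binom(2q+1,q)·((C²−1)/4)^{q+1}. -/

import Mathlib

/-- The coefficients `A_p(C)`, defined for `p ≥ 1`. -/
noncomputable def Acoef (C : ℝ) (p : ℕ) : ℝ :=
  C ^ ((1 : ℤ) - 2 * p) *
    ∑ q ∈ Finset.range p,
      (Nat.choose (p - 1) q : ℝ) * (Nat.choose (2 * q + 1) q : ℝ) *
        ((C ^ 2 - 1) / 4) ^ (q + 1)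

/-!
Put `x = (C² - 1)/4`, `z = β/C²` and `w = z/(1 - z)`. Since `binom(2q+1, q) = centralBinom (q+1)/2`,
the `p`-th term of the series is `C z^(p+1) ∑_q binom(p, q) a_q` with `a_q = centralBinom (q+1) x^(q+1)`:
the Euler transform of `∑_q a_q w^(q+1)`. By the generating function
`∑ centralBinom n tⁿ = (1 - 4t)^(-1/2)` this sum is `(1 - 4xw)^(-1/2) - 1`, and
`1 - 4xw = C² (1 - β)/(C² - β)`. The Euler transform is legitimate because the double series converges
absolutely: replacing `β` by `|β|` still gives `4x|z|/(1 - |z|) < 1`.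
-/

open Finset Nat Polynomial

theorem hasSum_choose_mul_pow_add_succ {𝕜 : Type*} [NormedField 𝕜] (q : ℕ) {z : 𝕜}
    (hz : ‖z‖ < 1) :
    HasSum (fun m => ((m + q).choose q : 𝕜) * z ^ (m + q + 1)) ((z / (1 - z)) ^ (q + 1)) := by
  rw [div_pow, div_eq_mul_one_div]
  exact ((hasSum_choose_mul_geometric_of_norm_lt_one q hz).mul_left _).congr_fun fun m => by ring

theorem hasSum_eulerTransform {𝕜 : Type*} [RCLike 𝕜] {a : ℕ → 𝕜} {z : 𝕜} (hz : ‖z‖ < 1)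
    (ha : Summable fun q => ‖a q‖ * (‖z‖ / (1 - ‖z‖)) ^ (q + 1)) :
    HasSum (fun p => (∑ q ∈ range (p + 1), (p.choose q : 𝕜) * a q) * z ^ (p + 1))
      (∑' q, a q * (z / (1 - z)) ^ (q + 1)) := by
  set F : ℕ × ℕ → 𝕜 := fun qm =>
    a qm.1 * (((qm.2 + qm.1).choose qm.1 : 𝕜) * z ^ (qm.2 + qm.1 + 1))
  have hrow (q : ℕ) : HasSum (fun m => F (q, m)) (a q * (z / (1 - z)) ^ (q + 1)) :=
    (hasSum_choose_mul_pow_add_succ q hz).mul_left (a q)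
  have hnorm : Summable fun qm => ‖F qm‖ := by
    have hz' : ‖(‖z‖)‖ < 1 := by rwa [norm_norm]
    have hnrow (q : ℕ) :
        HasSum (fun m => ‖F (q, m)‖) (‖a q‖ * (‖z‖ / (1 - ‖z‖)) ^ (q + 1)) := by
      simpa [F] using (hasSum_choose_mul_pow_add_succ q hz').mul_left ‖a q‖
    rw [summable_prod_of_nonneg fun _ => norm_nonneg _]
    exact ⟨fun q => (hnrow q).summable, ha.congr fun q => (hnrow q).tsum_eq.symm⟩
  have hF : HasSum F (∑' q, a q * (z / (1 - z)) ^ (q + 1)) := by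
    have h := hnorm.of_norm.hasSum
    rwa [← (h.prod_fiberwise hrow).tsum_eq] at h
  rw [← HasAntidiagonal.sigmaAntidiagonalEquivProd.hasSum_iff] at hF
  refine hF.sigma fun p => ?_
  convert hasSum_fintype _ using 1
  change _ = ∑ c : antidiagonal p, F c
  rw [sum_coe_sort (antidiagonal p) F, Nat.sum_antidiagonal_eq_sum_range_succ_mk, sum_mul]
  refine sum_congr rfl fun q hq => ?_
  simp only [F, Nat.sub_add_cancel (Nat.lt_succ_iff.mp (mem_range.mp hq))]
  ring

theorem four_pow_mul_eval_ascPochhammer_half (n : ℕ) :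
    4 ^ n * (ascPochhammer ℝ n).eval (1 / 2) = n ! * centralBinom n := by
  induction n with
  | zero => simp
  | succ n ih =>
    have h := congrArg (Nat.cast : ℕ → ℝ) (succ_mul_centralBinom_succ n)
    push_cast at h
    rw [ascPochhammer_succ_eval, factorial_succ, pow_succ]
    push_cast
    linear_combination (2 * (2 * n + 1) : ℝ) * ih - (n ! : ℝ) * h

theorem Ring.multichoose_half (n : ℕ) :
    Ring.multichoose (1 / 2 : ℝ) n = centralBinom n / 4 ^ n := by
  have h := Ring.factorial_nsmul_multichoose_eq_ascPochhammer (1 / 2 : ℝ) n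
  rw [ascPochhammer_smeval_eq_eval, nsmul_eq_mul] at h
  rw [eq_div_iff (by positivity)]
  apply mul_left_cancel₀ (show (n ! : ℝ) ≠ 0 by positivity)
  linear_combination 4 ^ n * h + four_pow_mul_eval_ascPochhammer_half n

theorem hasSum_centralBinom_mul_pow {t : ℝ} (ht : |t| < 1 / 4) :
    HasSum (fun n => (centralBinom n : ℝ) * t ^ n) (√(1 - 4 * t))⁻¹ := by
  have h4t : 4 * t ∈ Metric.eball (0 : ℝ) 1 := by
    rw [Metric.mem_eball, edist_dist, _root_.dist_zero_right, ENNReal.ofReal_lt_one, norm_mul]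
    norm_num
    linarith
  have h := (Real.one_div_one_sub_rpow_hasFPowerSeriesOnBall_zero (1 / 2)).hasSum h4t
  rw [zero_add, ← Real.sqrt_eq_rpow, one_div (√_)] at h
  refine h.congr_fun fun n => ?_
  rw [FormalMultilinearSeries.ofScalars_apply_eq, ← Ring.multichoose_eq, Ring.multichoose_half,
    smul_eq_mul, mul_pow]
  field_simp

theorem hasSum_centralBinom_succ_mul_pow_succ {t : ℝ} (ht : |t| < 1 / 4) :
    HasSum (fun n => (centralBinom (n + 1) : ℝ) * t ^ (n + 1)) ((√(1 - 4 * t))⁻¹ - 1) := by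
  simpa using (hasSum_nat_add_iff' 1).mpr (hasSum_centralBinom_mul_pow ht)

theorem Nat.centralBinom_succ (n : ℕ) : centralBinom (n + 1) = 2 * (2 * n + 1).choose n := by
  rw [centralBinom_eq_two_mul_choose, mul_add_one, choose_succ_succ, choose_symm_half, ← two_mul]

theorem two_mul_pow_mul_Acoef {C : ℝ} (hC : C ≠ 0) (β : ℝ) (p : ℕ) :
    2 * β ^ (p + 1) * Acoef C (p + 1) =
      C * ((∑ q ∈ range (p + 1), (p.choose q : ℝ) *
        (centralBinom (q + 1) * ((C ^ 2 - 1) / 4) ^ (q + 1))) * (β / C ^ 2) ^ (p + 1)) := by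
  have hpow : C ^ ((1 : ℤ) - 2 * (p + 1 : ℕ)) = C / (C ^ 2) ^ (p + 1) := by
    rw [zpow_sub₀ hC, zpow_one, ← pow_mul]
    norm_cast
  rw [Acoef, hpow, Nat.add_sub_cancel, mul_sum, mul_sum, sum_mul, mul_sum]
  refine sum_congr rfl fun q _ => ?_
  rw [centralBinom_succ, div_pow β]
  push_cast
  field_simp

theorem one_sub_four_mul_eq_sq_div {C β : ℝ} (hC : C ≠ 0) (hβ : β ≠ C ^ 2) :
    1 - 4 * ((C ^ 2 - 1) / 4 * (β / C ^ 2 / (1 - β / C ^ 2))) =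
      C ^ 2 / ((C ^ 2 - β) / (1 - β)) := by
  have : C ^ 2 - β ≠ 0 := sub_ne_zero.mpr hβ.symm
  field_simp
  ring

theorem abs_sq_sub_one_div_four_mul_lt {C β : ℝ} (hC : 1 < C) (hβ : |β| < 1) :
    |(C ^ 2 - 1) / 4 * (β / C ^ 2 / (1 - β / C ^ 2))| < 1 / 4 := by
  obtain ⟨hβl, hβr⟩ := abs_lt.mp hβ
  have hC2 : 1 < C ^ 2 := by nlinarith
  have hpos : 0 < C ^ 2 - β := by linarith
  have : (C ^ 2 - 1) / 4 * (β / C ^ 2 / (1 - β / C ^ 2)) =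
      (C ^ 2 - 1) * β / (4 * (C ^ 2 - β)) := by
    field_simp
  rw [this, abs_div, abs_of_pos (by positivity : (0 : ℝ) < 4 * (C ^ 2 - β)),
    div_lt_iff₀ (by positivity), abs_mul, abs_of_pos (by linarith : (0 : ℝ) < C ^ 2 - 1)]
  cases abs_cases β <;> nlinarith

theorem sqrt_series_expansion (C β : ℝ) (hC : 1 < C) (hβ : |β| < 1) :
    HasSum (fun p : ℕ => 2 * β ^ (p + 1) * Acoef C (p + 1))
      (Real.sqrt ((C ^ 2 - β) / (1 - β)) - C) := by
  have hC0 : 0 < C := by linarith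
  have hC2 : 1 < C ^ 2 := by nlinarith
  have hβ1 : β < 1 := (abs_lt.mp hβ).2
  have hz : ‖β / C ^ 2‖ = |β| / C ^ 2 := by
    rw [Real.norm_eq_abs, abs_div, abs_of_pos (by positivity : 0 < C ^ 2)]
  have hz1 : ‖β / C ^ 2‖ < 1 := by
    rw [hz, div_lt_one (by positivity)]
    linarith
  have habs : Summable fun q => ‖(centralBinom (q + 1) : ℝ) * ((C ^ 2 - 1) / 4) ^ (q + 1)‖ *
      (‖β / C ^ 2‖ / (1 - ‖β / C ^ 2‖)) ^ (q + 1) := by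
    refine (hasSum_centralBinom_succ_mul_pow_succ
      (abs_sq_sub_one_div_four_mul_lt hC ((abs_abs β).trans_lt hβ))).summable.congr fun q => ?_
    rw [hz, norm_mul, norm_pow, Real.norm_natCast, Real.norm_of_nonneg (by linarith), mul_pow,
      mul_assoc]
  have hval : C * ∑' q, (centralBinom (q + 1) : ℝ) * ((C ^ 2 - 1) / 4) ^ (q + 1) *
      (β / C ^ 2 / (1 - β / C ^ 2)) ^ (q + 1) = √((C ^ 2 - β) / (1 - β)) - C := by
    simp_rw [mul_assoc, ← mul_pow]
    rw [(hasSum_centralBinom_succ_mul_pow_succ (abs_sq_sub_one_div_four_mul_lt hC hβ)).tsum_eq,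
      one_sub_four_mul_eq_sq_div hC0.ne' (by linarith),
      Real.sqrt_div' _ (div_nonneg (by linarith) (by linarith)), Real.sqrt_sq hC0.le, inv_div]
    field_simp
  rw [← hval]
  exact ((hasSum_eulerTransform hz1 habs).mul_left C).congr_fun fun p =>
    two_mul_pow_mul_Acoef hC0.ne' β p
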